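/- Let U, V be Banach spaces, F : U → V Fréchet differentiable near u* with ‖F'(u) − F'(u*)‖ ≤ C ‖u − u*‖ for u near u*. Let U_r ⊆ U be a finite-dimensional subspace, T : V → V_s a bounded linear map with ‖T‖ ≤ M, and assume the stability bound ‖u_r‖_U ≤ 2K ‖T(F'(u*) u_r)‖_{V_s} for all u_r ∈ U_r. Then for every u with ‖u − u*‖ ≤ (4 K C M)⁻¹ one has ‖u_r‖_U ≤ 4K ‖T(F'(u) u_r)‖_{V_s} for all u_r ∈ U_r. -/
import Mathlib


theorem stmt4
    {U V Vs : Type*} [NormedAddCommGroup U] [NormedSpace ℝ U] [CompleteSpace U]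
    [NormedAddCommGroup V] [NormedSpace ℝ V] [CompleteSpace V]
    [NormedAddCommGroup Vs] [NormedSpace ℝ Vs] [FiniteDimensional ℝ Vs]
    (F : U → V) (F' : U → U →L[ℝ] V) (ustar : U)
    (C K M : ℝ) (hC : 0 < C) (hK : 0 < K) (hM : 0 < M)
    (hdiff : ∀ u : U, ‖u - ustar‖ ≤ (4 * K * C * M)⁻¹ → HasFDerivAt F (F' u) u)
    (hLip : ∀ u : U, ‖u - ustar‖ ≤ (4 * K * C * M)⁻¹ →
      ‖F' u - F' ustar‖ ≤ C * ‖u - ustar‖)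
    (Ur : Submodule ℝ U) [FiniteDimensional ℝ Ur]
    (T : V →L[ℝ] Vs) (hT : ‖T‖ ≤ M)
    (hstab : ∀ ur ∈ Ur, ‖ur‖ ≤ 2 * K * ‖T (F' ustar ur)‖) :
    ∀ u : U, ‖u - ustar‖ ≤ (4 * K * C * M)⁻¹ →
      ∀ ur ∈ Ur, ‖ur‖ ≤ 4 * K * ‖T (F' u ur)‖ := by
  intro u hu ur hur
  have hstab' := hstab ur hur
  -- bound on the perturbation term
  have hpert : ‖T (F' ustar ur) - T (F' u ur)‖ ≤ C * M * ‖u - ustar‖ * ‖ur‖ := by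
    have h1 : ‖T ((F' ustar - F' u) ur)‖ ≤ ‖T‖ * ‖(F' ustar - F' u) ur‖ :=
      T.le_opNorm _
    have h2 : ‖(F' ustar - F' u) ur‖ ≤ ‖F' ustar - F' u‖ * ‖ur‖ :=
      (F' ustar - F' u).le_opNorm _
    have h3 : ‖F' ustar - F' u‖ ≤ C * ‖u - ustar‖ := by
      rw [norm_sub_rev]; exact hLip u hu
    have : T ((F' ustar - F' u) ur) = T (F' ustar ur) - T (F' u ur) := by
      simp [ContinuousLinearMap.sub_apply]
    rw [← this]
    calc ‖T ((F' ustar - F' u) ur)‖ ≤ ‖T‖ * (‖F' ustar - F' u‖ * ‖ur‖) :=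
          h1.trans (by gcongr)
      _ ≤ M * ((C * ‖u - ustar‖) * ‖ur‖) := by gcongr
      _ = C * M * ‖u - ustar‖ * ‖ur‖ := by ring
  have hsmall : C * M * ‖u - ustar‖ ≤ (4 * K)⁻¹ := by
    have : C * M * ‖u - ustar‖ ≤ C * M * (4 * K * C * M)⁻¹ := by
      gcongr
    refine this.trans_eq ?_
    field_simp
  have hpos : (0:ℝ) < 4 * K := by positivity
  -- combine
  have key : ‖ur‖ ≤ 2 * K * ‖T (F' u ur)‖ + (1/2) * ‖ur‖ := by
    have h4 : ‖T (F' ustar ur)‖ ≤ ‖T (F' u ur)‖ + C * M * ‖u - ustar‖ * ‖ur‖ := by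
      calc ‖T (F' ustar ur)‖ ≤ ‖T (F' u ur)‖ + ‖T (F' ustar ur) - T (F' u ur)‖ := by
            have := norm_add_le (T (F' u ur)) (T (F' ustar ur) - T (F' u ur))
            simpa using this
        _ ≤ _ := by linarith
    have h5 : C * M * ‖u - ustar‖ * ‖ur‖ ≤ (4 * K)⁻¹ * ‖ur‖ := by
      gcongr
    calc ‖ur‖ ≤ 2 * K * ‖T (F' ustar ur)‖ := hstab'
      _ ≤ 2 * K * (‖T (F' u ur)‖ + (4 * K)⁻¹ * ‖ur‖) := by
          gcongr
          linarith
      _ = 2 * K * ‖T (F' u ur)‖ + (2 * K) * (4 * K)⁻¹ * ‖ur‖ := by ring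
      _ = 2 * K * ‖T (F' u ur)‖ + (1/2) * ‖ur‖ := by
          congr 2
          field_simp
          ring
  linarith
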